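/- arXiv:0907.4958 — 3 statements merged into one kernel-verified Lean document; each statement's English description precedes it below -/
import Mathlib

section
/- Let A be a vector space over a field of characteristic zero equipped with a bilinear product (a,b) ↦ ab satisfying the right pre-Lie identity (ab)c − a(bc) = (ac)b − a(cb) for all a,b,c. Then, with [a,b] = ab − ba and a·b = ab + ba, the identity (a₁·a₂)·a₃ − a₁·(a₂·a₃) − a₁·[a₂,a₃] − [a₁,a₂]·a₃ − 2[a₁,a₃]·a₂ + [a₁, a₂·a₃] + [a₁·a₂, a₃] + [[a₁,a₃],a₂] = 0 holds for all a₁,a₂,a₃ in A (second defining relation of Lemma 'PreLieSym'). -/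
theorem preLie_sym_second_relation_general
    (k : Type*) [Field k]
    (A : Type*) [AddCommGroup A] [Module k A]
    (mul : A →ₗ[k] A →ₗ[k] A)
    (prelie : ∀ a b c : A,
      mul (mul a b) c - mul a (mul b c) = mul (mul a c) b - mul a (mul c b))
    (br sdot : A → A → A)
    (hbr : ∀ a b : A, br a b = mul a b - mul b a)
    (hsdot : ∀ a b : A, sdot a b = mul a b + mul b a) :
    ∀ a₁ a₂ a₃ : A,
      sdot (sdot a₁ a₂) a₃ - sdot a₁ (sdot a₂ a₃) - sdot a₁ (br a₂ a₃)
        - sdot (br a₁ a₂) a₃ - (2 : k) • sdot (br a₁ a₃) a₂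
        + br a₁ (sdot a₂ a₃) + br (sdot a₁ a₂) a₃ + br (br a₁ a₃) a₂ = 0 := by
  intro a b c
  simp only [hbr, hsdot, map_add, map_sub, LinearMap.add_apply, LinearMap.sub_apply]
  -- Fully expanded, the left side is `δ(a,b,c) + 3 δ(b,a,c) + δ(c,a,b)`, where
  -- `δ(x,y,z) = (x,y,z) - (x,z,y)` is the defect of the associator's symmetry in its last two slots.
  linear_combination (norm := module) prelie a b c + (3 : k) • prelie b a c + prelie c a b

/-- In a right pre-Lie algebra over a field of characteristic zero, with
`[a,b] = ab - ba` and `a·b = ab + ba`, the second defining relation of Lemma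
`PreLieSym` holds. -/
theorem preLie_sym_second_relation
    (k : Type*) [Field k] [CharZero k]
    (A : Type*) [AddCommGroup A] [Module k A]
    (mul : A →ₗ[k] A →ₗ[k] A)
    (prelie : ∀ a b c : A,
      mul (mul a b) c - mul a (mul b c) = mul (mul a c) b - mul a (mul c b))
    (br sdot : A → A → A)
    (hbr : ∀ a b : A, br a b = mul a b - mul b a)
    (hsdot : ∀ a b : A, sdot a b = mul a b + mul b a) :
    ∀ a₁ a₂ a₃ : A,
      sdot (sdot a₁ a₂) a₃ - sdot a₁ (sdot a₂ a₃) - sdot a₁ (br a₂ a₃)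
        - sdot (br a₁ a₂) a₃ - (2 : k) • sdot (br a₁ a₃) a₂
        + br a₁ (sdot a₂ a₃) + br (sdot a₁ a₂) a₃ + br (br a₁ a₃) a₂ = 0 :=
  preLie_sym_second_relation_general k A mul prelie br sdot hbr hsdot
end

section
/- Let A be a vector space over a field of characteristic zero equipped with a bilinear product (a,b) ↦ ab satisfying the right pre-Lie identity (ab)c − a(bc) = (ac)b − a(cb) for all a,b,c. Then, with [a,b] = ab − ba and a·b = ab + ba, the identity (a₁·a₃)·a₂ − a₁·(a₂·a₃) + a₁·[a₂,a₃] − [a₁,a₃]·a₂ − 2[a₁,a₂]·a₃ + [a₁, a₂·a₃] + [a₁·a₃, a₂] + [[a₁,a₂],a₃] = 0 holds for all a₁,a₂,a₃ in A (third defining relation of Lemma 'PreLieSym'). -/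
/-! For an arbitrary bilinear product the left-hand side equals
`-D(a₁,a₂,a₃) + D(a₂,a₁,a₃) + 3 D(a₃,a₁,a₂)`, where `D(a,b,c) = (a,b,c) - (a,c,b)` is the defect of
the right pre-Lie identity, so it vanishes once every `D` does. -/

namespace LinearMap

variable {R A : Type*} [CommSemiring R] [AddCommGroup A] [Module R A]

def associator (mul : A →ₗ[R] A →ₗ[R] A) (a b c : A) : A :=
  mul (mul a b) c - mul a (mul b c)

theorem preLieSym_third_relation_eq (mul : A →ₗ[R] A →ₗ[R] A) (a₁ a₂ a₃ : A) :
    let br : A → A → A := fun a b => mul a b - mul b a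
    let sdot : A → A → A := fun a b => mul a b + mul b a
    let defect : A → A → A → A := fun a b c => associator mul a b c - associator mul a c b
    sdot (sdot a₁ a₃) a₂ - sdot a₁ (sdot a₂ a₃) + sdot a₁ (br a₂ a₃)
        - sdot (br a₁ a₃) a₂ - (2 : R) • sdot (br a₁ a₂) a₃
        + br a₁ (sdot a₂ a₃) + br (sdot a₁ a₃) a₂ + br (br a₁ a₂) a₃ =
      -defect a₁ a₂ a₃ + defect a₂ a₁ a₃ + (3 : ℕ) • defect a₃ a₁ a₂ := by
  simp only [associator, map_sub, map_add, sub_apply, add_apply, two_smul]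
  abel

end LinearMap

theorem preLie_sym_third_relation_general
    (k : Type*) [Field k]
    (A : Type*) [AddCommGroup A] [Module k A]
    (mul : A →ₗ[k] A →ₗ[k] A)
    (prelie : ∀ a b c : A,
      mul (mul a b) c - mul a (mul b c) = mul (mul a c) b - mul a (mul c b))
    (br sdot : A → A → A)
    (hbr : ∀ a b : A, br a b = mul a b - mul b a)
    (hsdot : ∀ a b : A, sdot a b = mul a b + mul b a) :
    ∀ a₁ a₂ a₃ : A,
      sdot (sdot a₁ a₃) a₂ - sdot a₁ (sdot a₂ a₃) + sdot a₁ (br a₂ a₃)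
        - sdot (br a₁ a₃) a₂ - (2 : k) • sdot (br a₁ a₂) a₃
        + br a₁ (sdot a₂ a₃) + br (sdot a₁ a₃) a₂ + br (br a₁ a₂) a₃ = 0 := by
  obtain rfl : br = fun a b => mul a b - mul b a := funext₂ hbr
  obtain rfl : sdot = fun a b => mul a b + mul b a := funext₂ hsdot
  have defect_eq_zero (a b c : A) :
      LinearMap.associator mul a b c - LinearMap.associator mul a c b = 0 :=
    sub_eq_zero.mpr (prelie a b c)
  intro a₁ a₂ a₃
  rw [LinearMap.preLieSym_third_relation_eq mul a₁ a₂ a₃]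
  simp only [defect_eq_zero, neg_zero, smul_zero, add_zero]

/-- In a right pre-Lie algebra over a field of characteristic zero, with
`[a,b] = ab - ba` and `a·b = ab + ba`, the third defining relation of Lemma
`PreLieSym` holds. -/
theorem preLie_sym_third_relation
    (k : Type*) [Field k] [CharZero k]
    (A : Type*) [AddCommGroup A] [Module k A]
    (mul : A →ₗ[k] A →ₗ[k] A)
    (prelie : ∀ a b c : A,
      mul (mul a b) c - mul a (mul b c) = mul (mul a c) b - mul a (mul c b))
    (br sdot : A → A → A)
    (hbr : ∀ a b : A, br a b = mul a b - mul b a)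
    (hsdot : ∀ a b : A, sdot a b = mul a b + mul b a) :
    ∀ a₁ a₂ a₃ : A,
      sdot (sdot a₁ a₃) a₂ - sdot a₁ (sdot a₂ a₃) + sdot a₁ (br a₂ a₃)
        - sdot (br a₁ a₃) a₂ - (2 : k) • sdot (br a₁ a₂) a₃
        + br a₁ (sdot a₂ a₃) + br (sdot a₁ a₃) a₂ + br (br a₁ a₂) a₃ = 0 :=
  preLie_sym_third_relation_general k A mul prelie br sdot hbr hsdot
end

section
/- Let A be a vector space over a field k of characteristic zero equipped with a bilinear symmetric operation (a,b) ↦ a·b and a bilinear skew-symmetric operation (a,b) ↦ [a,b] satisfying the three relations of Lemma 'PreLieSym': (i) [[a₁,a₂],a₃] − [[a₁,a₃],a₂] − [a₁,[a₂,a₃]] = 0; (ii) (a₁·a₂)·a₃ − a₁·(a₂·a₃) − a₁·[a₂,a₃] − [a₁,a₂]·a₃ − 2[a₁,a₃]·a₂ + [a₁, a₂·a₃] + [a₁·a₂, a₃] + [[a₁,a₃],a₂] = 0; (iii) (a₁·a₃)·a₂ − a₁·(a₂·a₃) + a₁·[a₂,a₃] − [a₁,a₃]·a₂ − 2[a₁,a₂]·a₃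 + [a₁, a₂·a₃] + [a₁·a₃, a₂] + [[a₁,a₂],a₃] = 0 for all a₁,a₂,a₃. Then the product ab := ½(a·b + [a,b]) satisfies the right pre-Lie identity (ab)c − a(bc) = (ac)b − a(cb) for all a,b,c in A. -/
/-!
Write `m := sdot + br`, so that `ab = ½ m(a, b)`. The associator of `½ m` is `¼` of that of `m`,
and once `c·b`, `[c,b]` are rewritten as `b·c`, `-[b,c]`, the defect
`assoc_m(a,b,c) - assoc_m(a,c,b)` is exactly the combination
`(ii)(a,b,c) - (ii)(a,c,b) + 2 (i)(a,b,c)` of the defining relations.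
-/

namespace PreLieSym

variable {R A : Type*} [CommRing R] [AddCommGroup A] [Module R A]

def assoc (m : A →ₗ[R] A →ₗ[R] A) (a b c : A) : A :=
  m (m a b) c - m a (m b c)

lemma assoc_smul (r : R) (m : A →ₗ[R] A →ₗ[R] A) (a b c : A) :
    assoc (r • m) a b c = (r * r) • assoc m a b c := by
  simp only [assoc, LinearMap.smul_apply, map_smul, smul_sub, smul_smul]

def relator₁ (br : A →ₗ[R] A →ₗ[R] A) (a₁ a₂ a₃ : A) : A :=
  br (br a₁ a₂) a₃ - br (br a₁ a₃) a₂ - br a₁ (br a₂ a₃)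

def relator₂ (sdot br : A →ₗ[R] A →ₗ[R] A) (a₁ a₂ a₃ : A) : A :=
  sdot (sdot a₁ a₂) a₃ - sdot a₁ (sdot a₂ a₃) - sdot a₁ (br a₂ a₃)
    - sdot (br a₁ a₂) a₃ - (2 : R) • sdot (br a₁ a₃) a₂
    + br a₁ (sdot a₂ a₃) + br (sdot a₁ a₂) a₃ + br (br a₁ a₃) a₂

lemma assoc_sub_assoc_swap_sdot_add_br (sdot br : A →ₗ[R] A →ₗ[R] A)
    (hsym : ∀ a b : A, sdot a b = sdot b a) (hskew : ∀ a b : A, br a b = - br b a)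
    (a b c : A) :
    assoc (sdot + br) a b c - assoc (sdot + br) a c b =
      relator₂ sdot br a b c - relator₂ sdot br a c b + (2 : R) • relator₁ br a b c := by
  have hcb : sdot c b = sdot b c := hsym c b
  have hcb' : br c b = - br b c := hskew c b
  simp only [assoc, relator₁, relator₂, LinearMap.add_apply, map_add, map_neg, hcb, hcb']
  module

end PreLieSym

open PreLieSym in
theorem preLie_sym_relations_imply_preLie_general
    (k : Type*) [Field k]
    (A : Type*) [AddCommGroup A] [Module k A]
    (sdot br : A →ₗ[k] A →ₗ[k] A)
    (hsym : ∀ a b : A, sdot a b = sdot b a)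
    (hskew : ∀ a b : A, br a b = - br b a)
    (rel1 : ∀ a₁ a₂ a₃ : A,
      br (br a₁ a₂) a₃ - br (br a₁ a₃) a₂ - br a₁ (br a₂ a₃) = 0)
    (rel2 : ∀ a₁ a₂ a₃ : A,
      sdot (sdot a₁ a₂) a₃ - sdot a₁ (sdot a₂ a₃) - sdot a₁ (br a₂ a₃)
        - sdot (br a₁ a₂) a₃ - (2 : k) • sdot (br a₁ a₃) a₂
        + br a₁ (sdot a₂ a₃) + br (sdot a₁ a₂) a₃ + br (br a₁ a₃) a₂ = 0)
    (mul : A → A → A)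
    (hmul : ∀ a b : A, mul a b = (2 : k)⁻¹ • (sdot a b + br a b)) :
    ∀ a b c : A,
      mul (mul a b) c - mul a (mul b c) = mul (mul a c) b - mul a (mul c b) := by
  intro a b c
  obtain rfl : mul = fun a b ↦ ((2 : k)⁻¹ • (sdot + br)) a b := by
    funext a b
    simp only [hmul, LinearMap.smul_apply, LinearMap.add_apply]
  rw [← sub_eq_zero]
  change assoc _ a b c - assoc _ a c b = 0
  have h₁ : relator₁ br a b c = 0 := rel1 a b c
  have h₂ : ∀ x y, relator₂ sdot br a x y = 0 := rel2 a
  rw [assoc_smul, assoc_smul, ← smul_sub, assoc_sub_assoc_swap_sdot_add_br sdot br hsym hskew,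
    h₁, h₂, h₂, sub_self, smul_zero, zero_add, smul_zero]

/-- Given a symmetric bilinear operation `·` and a skew-symmetric bilinear
operation `[·,·]` satisfying the three relations of Lemma `PreLieSym`, the product
`ab := ½(a·b + [a,b])` satisfies the right pre-Lie identity. -/
theorem preLie_sym_relations_imply_preLie
    (k : Type*) [Field k] [CharZero k]
    (A : Type*) [AddCommGroup A] [Module k A]
    (sdot br : A →ₗ[k] A →ₗ[k] A)
    (hsym : ∀ a b : A, sdot a b = sdot b a)
    (hskew : ∀ a b : A, br a b = - br b a)
    (rel1 : ∀ a₁ a₂ a₃ : A,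
      br (br a₁ a₂) a₃ - br (br a₁ a₃) a₂ - br a₁ (br a₂ a₃) = 0)
    (rel2 : ∀ a₁ a₂ a₃ : A,
      sdot (sdot a₁ a₂) a₃ - sdot a₁ (sdot a₂ a₃) - sdot a₁ (br a₂ a₃)
        - sdot (br a₁ a₂) a₃ - (2 : k) • sdot (br a₁ a₃) a₂
        + br a₁ (sdot a₂ a₃) + br (sdot a₁ a₂) a₃ + br (br a₁ a₃) a₂ = 0)
    (rel3 : ∀ a₁ a₂ a₃ : A,
      sdot (sdot a₁ a₃) a₂ - sdot a₁ (sdot a₂ a₃) + sdot a₁ (br a₂ a₃)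
        - sdot (br a₁ a₃) a₂ - (2 : k) • sdot (br a₁ a₂) a₃
        + br a₁ (sdot a₂ a₃) + br (sdot a₁ a₃) a₂ + br (br a₁ a₂) a₃ = 0)
    (mul : A → A → A)
    (hmul : ∀ a b : A, mul a b = (2 : k)⁻¹ • (sdot a b + br a b)) :
    ∀ a b c : A,
      mul (mul a b) c - mul a (mul b c) = mul (mul a c) b - mul a (mul c b) :=
  preLie_sym_relations_imply_preLie_general k A sdot br hsym hskew rel1 rel2 mul hmul
end
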